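/- Let P be a group of errors, 𝒞 a recursive [[n,k,s,m]] morphism, and E = (M, L₁, S₁, …, L_N, S_N) an input to 𝒞_N with every S_i ∈ Z^s and trace (b₀, …, b_{w_L}). Then for every i ∈ {0, …, w_L−1}, if b_i = 0 then b_{i+1} = 1. -/

import Mathlib

open scoped BigOperators

namespace Turbo

variable {P : Type} [Group P]

/-- Weight of an error: the number of non-identity coordinates. -/
noncomputable def wt {n : ℕ} (E : Fin n → P) : ℕ := {i | E i ≠ 1}.ncard

/-- Pad a finite sequence of blocks to an infinite one by identity blocks. -/
def pad {β : Type} [One β] {N : ℕ} (x : Fin N → β) : ℕ → β :=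
  fun i => if h : i < N then x ⟨i, h⟩ else 1

/-- All blocks of a stabilizer sequence have coordinates in `Z`. -/
def ZValued (Z : Subgroup P) {s : ℕ} (S : ℕ → Fin s → P) : Prop := ∀ i j, S i j ∈ Z

/-- Intermediate memory error `M_i` of a convolutional morphism built from the seed `F`. -/
def convMem {m k s n : ℕ}
    (F : ((Fin m → P) × (Fin k → P) × (Fin s → P)) → ((Fin n → P) × (Fin m → P)))
    (M : Fin m → P) (L : ℕ → Fin k → P) (S : ℕ → Fin s → P) : ℕ → Fin m → P
  | 0 => M
  | i + 1 => (F (convMem F M L S i, L i, S i)).2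

/-- The `i`-th physical output block `P_{i+1}` of the convolutional morphism. -/
def convOut {m k s n : ℕ}
    (F : ((Fin m → P) × (Fin k → P) × (Fin s → P)) → ((Fin n → P) × (Fin m → P)))
    (M : Fin m → P) (L : ℕ → Fin k → P) (S : ℕ → Fin s → P) (i : ℕ) : Fin n → P :=
  (F (convMem F M L S i, L i, S i)).1

/-- Weight of the physical output `π_N` (first `N` physical blocks). -/
noncomputable def outWt {m k s n : ℕ}
    (F : ((Fin m → P) × (Fin k → P) × (Fin s → P)) → ((Fin n → P) × (Fin m → P)))
    (M : Fin m → P) (L : ℕ → Fin k → P) (S : ℕ → Fin s → P) (N : ℕ) : ℕ :=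
  ∑ i ∈ Finset.range N, wt (convOut F M L S i)

/-- Weight of the full output `𝒞_N(E) = (P_1, …, P_N, M_N)`. -/
noncomputable def fullWt {m k s n : ℕ}
    (F : ((Fin m → P) × (Fin k → P) × (Fin s → P)) → ((Fin n → P) × (Fin m → P)))
    (M : Fin m → P) (L : ℕ → Fin k → P) (S : ℕ → Fin s → P) (N : ℕ) : ℕ :=
  outWt F M L S N + wt (convMem F M L S N)

/-- The output `𝒞_∞(E)` of the infinite convolutional morphism has infinite weight. -/
def InfOutput {m k s n : ℕ}
    (F : ((Fin m → P) × (Fin k → P) × (Fin s → P)) → ((Fin n → P) × (Fin m → P)))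
    (M : Fin m → P) (L : ℕ → Fin k → P) (S : ℕ → Fin s → P) : Prop :=
  {i : ℕ | convOut F M L S i ≠ 1}.Infinite

/-- The information part of an infinite input has exactly one non-identity letter. -/
def OneInfoLetter {k : ℕ} (L : ℕ → Fin k → P) : Prop :=
  ∃! p : ℕ × Fin k, L p.1 p.2 ≠ 1

/-- A recursive `[[n,k,s,m]]` morphism. -/
def Recursive {m k s n : ℕ} (Z : Subgroup P)
    (F : ((Fin m → P) × (Fin k → P) × (Fin s → P)) → ((Fin n → P) × (Fin m → P))) : Prop :=
  ∀ (L : ℕ → Fin k → P) (S : ℕ → Fin s → P),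
    OneInfoLetter L → ZValued Z S → InfOutput F 1 L S

/-- A systematic morphism: the output weight dominates the information weight. -/
def Systematic {m k s n : ℕ}
    (F : ((Fin m → P) × (Fin k → P) × (Fin s → P)) → ((Fin n → P) × (Fin m → P))) : Prop :=
  ∀ (N : ℕ) (M : Fin m → P) (L : ℕ → Fin k → P) (S : ℕ → Fin s → P),
    (∑ i ∈ Finset.range N, wt (L i)) ≤ fullWt F M L S N

/-- The set `M₁` of memory errors giving an infinite output on trivial information input. -/
def M1 {m k s n : ℕ} (Z : Subgroup P)
    (F : ((Fin m → P) × (Fin k → P) × (Fin s → P)) → ((Fin n → P) × (Fin m → P))) :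
    Set (Fin m → P) :=
  {M | ∀ S : ℕ → Fin s → P, ZValued Z S → InfOutput F M 1 S}

/-- The set of candidate speeds of a morphism. -/
def speedSet {m k s n : ℕ} (Z : Subgroup P)
    (F : ((Fin m → P) × (Fin k → P) × (Fin s → P)) → ((Fin n → P) × (Fin m → P))) : Set ℕ :=
  {η | 0 < η ∧ ∀ M ∈ M1 Z F, ∀ S : ℕ → Fin s → P, ZValued Z S → 1 ≤ outWt F M 1 S η}

/-- `η` is the speed of the morphism `F`. -/
def IsSpeed {m k s n : ℕ} (Z : Subgroup P)
    (F : ((Fin m → P) × (Fin k → P) × (Fin s → P)) → ((Fin n → P) × (Fin m → P)))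
    (η : ℕ) : Prop :=
  IsLeast (speedSet Z F) η

/-- The set `𝕀` of memory errors accessible from the identity memory with trivial
information and `Z`-valued stabilizers. -/
def Iset {m k s n : ℕ} (Z : Subgroup P)
    (F : ((Fin m → P) × (Fin k → P) × (Fin s → P)) → ((Fin n → P) × (Fin m → P))) :
    Set (Fin m → P) :=
  {M | ∃ (N : ℕ) (S : ℕ → Fin s → P), ZValued Z S ∧ M = convMem F 1 1 S N}

/- ### Block `[[n,k]]` encoders -/

/-- `E` is undetected for the `[[n,k]]` encoder `C`. -/
def Undetected {k n : ℕ} (Z : Subgroup P)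
    (C : ((Fin k → P) × (Fin (n - k) → P)) ≃* (Fin n → P)) (E : Fin n → P) : Prop :=
  E ≠ 1 ∧ ∀ j, (C.symm E).2 j ∈ Z

/-- `E` is harmful for the `[[n,k]]` encoder `C`. -/
def Harmful {k n : ℕ} (Z : Subgroup P)
    (C : ((Fin k → P) × (Fin (n - k) → P)) ≃* (Fin n → P)) (E : Fin n → P) : Prop :=
  Undetected Z C E ∧ (C.symm E).1 ≠ 1

/-- The distance `d_c` of an `[[n,k]]` encoder. -/
noncomputable def encDist {k n : ℕ} (Z : Subgroup P)
    (C : ((Fin k → P) × (Fin (n - k) → P)) ≃* (Fin n → P)) : ℕ :=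
  sInf {w | ∃ E, Harmful Z C E ∧ wt E = w}

/-- The degenerate distance `d_q` of an `[[n,k]]` encoder. -/
noncomputable def encDegenDist {k n : ℕ} (Z : Subgroup P)
    (C : ((Fin k → P) × (Fin (n - k) → P)) ≃* (Fin n → P)) : ℕ :=
  sInf {w | ∃ E, Undetected Z C E ∧ wt E = w}

/-- Weight distribution `a^{⊗N}(d)` of the blockwise encoder `C^{⊗N}`. -/
noncomputable def aTensor {k n : ℕ} (Z : Subgroup P)
    (C : ((Fin k → P) × (Fin (n - k) → P)) ≃* (Fin n → P)) (N d : ℕ) : ℕ :=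
  Set.ncard {E : (Fin N → Fin k → P) × (Fin N → Fin (n - k) → P) |
    (∀ i j, E.2 i j ∈ Z) ∧ E.1 ≠ 1 ∧ (∑ i, wt (C (E.1 i, E.2 i))) = d}

/- ### `[[n,k,m]]` encoders and their truncated decoders -/

/-- The truncated decoder `C̄` of an `[[n,k,m]]` encoder `C`, as a `[[k,n,0,m]]` morphism. -/
def truncDecoder {m k n : ℕ}
    (C : ((Fin m → P) × (Fin k → P) × (Fin (n - k) → P)) ≃* ((Fin n → P) × (Fin m → P))) :
    ((Fin m → P) × (Fin n → P) × (Fin 0 → P)) → ((Fin k → P) × (Fin m → P)) :=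
  fun x => ((C.symm (x.2.1, x.1)).2.1, (C.symm (x.2.1, x.1)).1)

/-- Weight distribution `a_N(w, d)` of a convolutional morphism. -/
noncomputable def aN {m k s n : ℕ} (Z : Subgroup P)
    (F : ((Fin m → P) × (Fin k → P) × (Fin s → P)) → ((Fin n → P) × (Fin m → P)))
    (N w d : ℕ) : ℕ :=
  Set.ncard {ML : (Fin m → P) × (Fin N → Fin k → P) |
    (wt ML.1 + ∑ i, wt (ML.2 i)) = w ∧
    ∃ S : Fin N → Fin s → P, (∀ i j, S i j ∈ Z) ∧
      fullWt F ML.1 (pad ML.2) (pad S) N = d}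

/-- Weight distribution `a_N(w, ≤ d)` of a convolutional morphism. -/
noncomputable def aNle {m k s n : ℕ} (Z : Subgroup P)
    (F : ((Fin m → P) × (Fin k → P) × (Fin s → P)) → ((Fin n → P) × (Fin m → P)))
    (N w : ℕ) (d : ℝ) : ℕ :=
  Set.ncard {ML : (Fin m → P) × (Fin N → Fin k → P) |
    (wt ML.1 + ∑ i, wt (ML.2 i)) = w ∧
    ∃ S : Fin N → Fin s → P, (∀ i j, S i j ∈ Z) ∧
      (fullWt F ML.1 (pad ML.2) (pad S) N : ℝ) ≤ d}

/- ### Traces and detours -/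

/-- Replace every information letter at (1-indexed flattened) position `> p` by the identity. -/
def truncAfter {k : ℕ} (L : ℕ → Fin k → P) (p : ℕ) : ℕ → Fin k → P :=
  fun i j => if i * k + (j : ℕ) + 1 ≤ p then L i j else 1

/-- `q` is the (1-indexed flattened) position of a non-identity information letter of the
first `N` information blocks. -/
def IsInfoPos {k : ℕ} (N : ℕ) (L : ℕ → Fin k → P) (q : ℕ) : Prop :=
  ∃ (i : ℕ) (j : Fin k), i < N ∧ q = i * k + (j : ℕ) + 1 ∧ L i j ≠ 1

/-- The information part of the `i`-th truncature `E_{∖i}`. -/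
def truncInfo {k : ℕ} (L : ℕ → Fin k → P) (p : ℕ → ℕ) : ℕ → (ℕ → Fin k → P)
  | 0 => 1
  | i + 1 => truncAfter L (p i)

/-- The number `N_i` of blocks making up the `i`-th truncature (with `N_0 = 0`):
the block containing the position `p i`. -/
def cutOf (k : ℕ) (p : ℕ → ℕ) : ℕ → ℕ
  | 0 => 0
  | i + 1 => (p i - 1) / k + 1

/-- Extend a stabilizer sequence: the first `cut` blocks come from `S`, the rest from `St`. -/
def extendS {s : ℕ} (S : ℕ → Fin s → P) (cut : ℕ) (St : ℕ → Fin s → P) : ℕ → Fin s → P :=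
  fun j => if j < cut then S j else St (j - cut)

/-- The intermediate memory error `M_i` attached to the `i`-th truncature `E_{∖i}`. -/
def traceMem {m k s n : ℕ}
    (F : ((Fin m → P) × (Fin k → P) × (Fin s → P)) → ((Fin n → P) × (Fin m → P)))
    (M : Fin m → P) (L : ℕ → Fin k → P) (S : ℕ → Fin s → P) (p : ℕ → ℕ) : ℕ → Fin m → P
  | 0 => M
  | i + 1 => convMem F M (truncAfter L (p i)) S ((p i - 1) / k + 1)

/-- Paper-indexed positions: `pp p 0 = 0` and `pp p j = p (j-1)` for `j ≥ 1`. -/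
def pp (p : ℕ → ℕ) : ℕ → ℕ
  | 0 => 0
  | j + 1 => p j

/-- The segment `[a, c)` of the trace `b` is a terminating detour: a nonempty run of `1`'s
followed by a single final `0`. -/
def IsTermDetour (b : ℕ → Prop) (a c : ℕ) : Prop :=
  a + 1 < c ∧ (∀ t, a ≤ t → t + 1 < c → b t) ∧ ¬ b (c - 1)

/-- The segment `[a, c)` of the trace `b` is a detour: a nonempty run of `1`'s, possibly
completed with a single final `0`. -/
def IsDetour (b : ℕ → Prop) (a c : ℕ) : Prop :=
  (a < c ∧ ∀ t, a ≤ t → t < c → b t) ∨ IsTermDetour b a c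

end Turbo

/-!
If both `M_i` and `M_{i+1}` were outside `M₁`, there would be `Z`-valued stabilizer tails with
which the truncatures `E_{∖i}` and `E_{∖(i+1)}`, continued by trivial information, have finite
output. Since `𝒞_∞` is a homomorphism, so does the quotient of the two continued inputs; but that
quotient starts from the memory `M / M = 1`, has `Z`-valued stabilizers and a single information
letter (the `(i+1)`-th letter of `E`), so its output is infinite by recursiveness.
-/

namespace Turbo

variable {P : Type} {m k s n : ℕ}

section Shift

variable (F : ((Fin m → P) × (Fin k → P) × (Fin s → P)) → ((Fin n → P) × (Fin m → P)))

theorem convMem_congr (M : Fin m → P) {L L' : ℕ → Fin k → P} {S S' : ℕ → Fin s → P} {t : ℕ}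
    (hL : ∀ u < t, L u = L' u) (hS : ∀ u < t, S u = S' u) :
    convMem F M L S t = convMem F M L' S' t := by
  induction t with
  | zero => rfl
  | succ t ih =>
    simp only [convMem, ih (fun u hu => hL u (by omega)) (fun u hu => hS u (by omega)),
      hL t t.lt_succ_self, hS t t.lt_succ_self]

theorem convMem_add (M : Fin m → P) (L : ℕ → Fin k → P) (S : ℕ → Fin s → P) (N t : ℕ) :
    convMem F M L S (N + t)
      = convMem F (convMem F M L S N) (fun a => L (N + a)) (fun a => S (N + a)) t := by
  induction t with
  | zero => rfl
  | succ t ih => rw [← Nat.add_assoc, convMem, convMem, ih]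

theorem convOut_add (M : Fin m → P) (L : ℕ → Fin k → P) (S : ℕ → Fin s → P) (N t : ℕ) :
    convOut F M L S (N + t)
      = convOut F (convMem F M L S N) (fun a => L (N + a)) (fun a => S (N + a)) t := by
  simp only [convOut, convMem_add]

end Shift

variable [Group P]

section Linearity

variable (𝒞 : ((Fin m → P) × (Fin k → P) × (Fin s → P)) →* ((Fin n → P) × (Fin m → P)))
  (M M' : Fin m → P) (L L' : ℕ → Fin k → P) (S S' : ℕ → Fin s → P)

theorem convMem_div (t : ℕ) :
    convMem ⇑𝒞 (M / M') (L / L') (S / S') t = convMem ⇑𝒞 M L S t / convMem ⇑𝒞 M' L' S' t := by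
  induction t with
  | zero => rfl
  | succ t ih =>
    simp only [convMem, ih]
    exact congrArg Prod.snd
      (map_div 𝒞 (convMem ⇑𝒞 M L S t, L t, S t) (convMem ⇑𝒞 M' L' S' t, L' t, S' t))

theorem convOut_div (t : ℕ) :
    convOut ⇑𝒞 (M / M') (L / L') (S / S') t = convOut ⇑𝒞 M L S t / convOut ⇑𝒞 M' L' S' t := by
  simp only [convOut, convMem_div]
  exact congrArg Prod.fst
    (map_div 𝒞 (convMem ⇑𝒞 M L S t, L t, S t) (convMem ⇑𝒞 M' L' S' t, L' t, S' t))

theorem InfOutput.or_of_div (h : InfOutput ⇑𝒞 (M / M') (L / L') (S / S')) :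
    InfOutput ⇑𝒞 M L S ∨ InfOutput ⇑𝒞 M' L' S' := by
  by_contra! hfin
  refine h ((Set.not_infinite.1 hfin.1).union (Set.not_infinite.1 hfin.2) |>.subset ?_)
  intro t ht
  by_contra hnot
  simp only [Set.mem_union, Set.mem_ofPred_eq, not_or, not_not] at hnot
  exact ht (by rw [convOut_div, hnot.1, hnot.2, div_one])

end Linearity

section Splicing

variable (F : ((Fin m → P) × (Fin k → P) × (Fin s → P)) → ((Fin n → P) × (Fin m → P)))

theorem convOut_extendS {M : Fin m → P} {L : ℕ → Fin k → P} {N : ℕ} (hL : ∀ a, N ≤ a → L a = 1)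
    (S T : ℕ → Fin s → P) (u : ℕ) :
    convOut F M L (extendS S N T) (N + u) = convOut F (convMem F M L S N) 1 T u := by
  have hprefix : convMem F M L (extendS S N T) N = convMem F M L S N :=
    convMem_congr F M (fun _ _ => rfl) (fun u hu => by simp [extendS, hu])
  have hL' : (fun a => L (N + a)) = 1 := funext fun a => hL _ (Nat.le_add_right N a)
  have hT : (fun a => extendS S N T (N + a)) = T := funext fun a => by simp [extendS]
  rw [convOut_add, hprefix, hL', hT]

theorem InfOutput.of_extendS {M : Fin m → P} {L : ℕ → Fin k → P} {S T : ℕ → Fin s → P} {N : ℕ}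
    (hL : ∀ a, N ≤ a → L a = 1) (h : InfOutput F M L (extendS S N T)) :
    InfOutput F (convMem F M L S N) 1 T := by
  refine Set.infinite_of_forall_exists_gt fun u₀ => ?_
  obtain ⟨t, ht, hlt⟩ := h.exists_gt (N + u₀)
  refine ⟨t - N, ?_, by omega⟩
  rw [Set.mem_ofPred_eq, ← convOut_extendS F hL S T, Nat.add_sub_cancel' (by omega)]
  exact ht

end Splicing

theorem ZValued.div {Z : Subgroup P} {S S' : ℕ → Fin s → P} (hS : ZValued Z S)
    (hS' : ZValued Z S') : ZValued Z (S / S') :=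
  fun i j => Z.div_mem (hS i j) (hS' i j)

theorem ZValued.extendS {Z : Subgroup P} {S T : ℕ → Fin s → P} (hS : ZValued Z S)
    (hT : ZValued Z T) (N : ℕ) : ZValued Z (extendS S N T) := by
  intro i j
  unfold Turbo.extendS
  split_ifs
  exacts [hS i j, hT _ j]

theorem zValued_pad {Z : Subgroup P} {N : ℕ} {S : Fin N → Fin s → P} (hS : ∀ i j, S i j ∈ Z) :
    ZValued Z (pad S) := by
  intro i j
  unfold pad
  split_ifs
  exacts [hS _ j, Z.one_mem]

theorem mem_M1_of_not_mem_M1 {Z : Subgroup P}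
    {𝒞 : ((Fin m → P) × (Fin k → P) × (Fin s → P)) →* ((Fin n → P) × (Fin m → P))}
    (hrec : Recursive Z ⇑𝒞) {M : Fin m → P} {LA LB : ℕ → Fin k → P} {S : ℕ → Fin s → P}
    (hS : ZValued Z S) {NA NB : ℕ} (hLA : ∀ a, NA ≤ a → LA a = 1)
    (hLB : ∀ a, NB ≤ a → LB a = 1) (hone : OneInfoLetter (LB / LA))
    (hA : convMem ⇑𝒞 M LA S NA ∉ M1 Z ⇑𝒞) :
    convMem ⇑𝒞 M LB S NB ∈ M1 Z ⇑𝒞 := by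
  intro TB hTB
  obtain ⟨TA, hTA, hfin⟩ : ∃ TA, ZValued Z TA ∧ ¬InfOutput ⇑𝒞 (convMem ⇑𝒞 M LA S NA) 1 TA := by
    simpa [M1] using hA
  have hquot := hrec _ _ hone ((hS.extendS hTB NB).div (hS.extendS hTA NA))
  rw [← div_self' M] at hquot
  rcases hquot.or_of_div with hB | hA'
  · exact hB.of_extendS _ hLB
  · exact absurd (hA'.of_extendS _ hLA) hfin

theorem truncAfter_eq_one {L : ℕ → Fin k → P} {q a : ℕ} (h : q ≤ a * k) :
    truncAfter L q a = 1 := by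
  funext j
  simp only [truncAfter, Pi.one_apply]
  rw [if_neg (by omega)]

theorem eq_of_mul_add_eq_mul_add {a a' j j' : ℕ} (hj : j < k) (hj' : j' < k)
    (h : a * k + j = a' * k + j') : a = a' ∧ j = j' := by
  have hk : 0 < k := by omega
  have hdiv : ∀ b c, c < k → (b * k + c) / k = b ∧ (b * k + c) % k = c := fun b c hc =>
    (Nat.div_mod_unique hk).2 ⟨by ring, hc⟩
  obtain ⟨h1, h2⟩ := hdiv a j hj
  obtain ⟨h1', h2'⟩ := hdiv a' j' hj'
  rw [h] at h1 h2
  exact ⟨h1 ▸ h1', h2 ▸ h2'⟩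

theorem oneInfoLetter_truncAfter_div {L : ℕ → Fin k → P} {q r a₀ : ℕ} {j₀ : Fin k}
    (h₀ : L a₀ j₀ ≠ 1) (hr : a₀ * k + j₀ + 1 = r) (hqr : q < r)
    (huniq : ∀ a (j : Fin k), L a j ≠ 1 → q < a * k + j + 1 → a * k + j + 1 ≤ r →
      a * k + j + 1 = r) :
    OneInfoLetter (truncAfter L r / truncAfter L q) := by
  refine ⟨(a₀, j₀), ?_, ?_⟩
  · simpa [truncAfter, hr.le, hr ▸ hqr |>.not_ge] using h₀
  · rintro ⟨a, j⟩ hne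
    simp only [Pi.div_apply, truncAfter] at hne
    split_ifs at hne with hr' hq hq
    · exact absurd (div_self' _) hne
    · have hat := huniq a j (by simpa using hne) (by omega) hr'
      obtain ⟨rfl, hj⟩ := eq_of_mul_add_eq_mul_add j.isLt j₀.isLt
        (by omega : a * k + j = a₀ * k + j₀)
      exact Prod.ext rfl (Fin.ext hj)
    · omega
    · exact absurd (div_one _) hne

theorem traceMem_eq (F : ((Fin m → P) × (Fin k → P) × (Fin s → P)) → ((Fin n → P) × (Fin m → P)))
    (M : Fin m → P) (L : ℕ → Fin k → P) (S : ℕ → Fin s → P) (p : ℕ → ℕ) (i : ℕ) :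
    traceMem F M L S p i = convMem F M (truncAfter L (pp p i)) S (cutOf k p i) := by
  cases i <;> rfl

theorem truncAfter_pp_eq_one (hk : 0 < k) (L : ℕ → Fin k → P) (p : ℕ → ℕ) {i a : ℕ}
    (ha : cutOf k p i ≤ a) : truncAfter L (pp p i) a = 1 := by
  refine truncAfter_eq_one (le_trans ?_ (Nat.mul_le_mul_right k ha))
  cases i with
  | zero => exact Nat.zero_le _
  | succ i =>
    have := Nat.lt_div_mul_add (a := p i - 1) hk
    simp only [pp, cutOf, Nat.add_mul, one_mul]
    omega

section Positions

variable {p : ℕ → ℕ} {wL : ℕ}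

theorem pp_lt_self (hmono : ∀ i j, i < j → j < wL → p i < p j) {i : ℕ} (hi : i < wL)
    (hpos : 0 < p i) : pp p i < p i := by
  cases i with
  | zero => exact hpos
  | succ i => exact hmono i (i + 1) i.lt_succ_self hi

theorem eq_of_pp_lt_of_le (hmono : ∀ i j, i < j → j < wL → p i < p j) {i j : ℕ} (hi : i < wL)
    (hj : j < wL) (hlt : pp p i < p j) (hle : p j ≤ p i) : j = i := by
  rcases lt_trichotomy j i with hji | rfl | hij
  · cases i with
    | zero => omega
    | succ i =>
      have : p j ≤ p i := by
        rcases (Nat.lt_succ_iff.1 hji).lt_or_eq with h | rfl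
        exacts [(hmono j i h (by omega)).le, le_rfl]
      exact absurd hlt this.not_gt
  · rfl
  · exact absurd (hmono i j hij hj) hle.not_gt

end Positions

end Turbo

open Turbo in
theorem trace_zero_one_general {P : Type} [Group P] (Z : Subgroup P)
    {m k s n : ℕ}
    (𝒞 : ((Fin m → P) × (Fin k → P) × (Fin s → P)) →* ((Fin n → P) × (Fin m → P)))
    (hrec : Recursive Z ⇑𝒞)
    (N : ℕ) (M : Fin m → P) (L : Fin N → Fin k → P) (S : Fin N → Fin s → P)
    (hS : ∀ i j, S i j ∈ Z)
    (wL : ℕ) (p : ℕ → ℕ)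
    (hmono : ∀ i j, i < j → j < wL → p i < p j)
    (hrange : ∀ q, IsInfoPos N (pad L) q ↔ ∃ i < wL, p i = q) :
    ∀ i, i < wL →
      traceMem ⇑𝒞 M (pad L) (pad S) p i ∉ M1 Z ⇑𝒞 →
      traceMem ⇑𝒞 M (pad L) (pad S) p (i + 1) ∈ M1 Z ⇑𝒞 := by
  intro i hi hMi
  obtain ⟨a₀, j₀, -, hpi, h₀⟩ := (hrange (p i)).2 ⟨i, hi, rfl⟩
  have hk : 0 < k := j₀.pos
  have huniq : ∀ a (j : Fin k), pad L a j ≠ 1 → pp p i < a * k + j + 1 →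
      a * k + j + 1 ≤ p i → a * k + j + 1 = p i := by
    intro a j hne hlt hle
    have haN : a < N := by
      by_contra h
      exact hne (by simp [pad, h])
    obtain ⟨i', hi', hpi'⟩ := (hrange _).1 ⟨a, j, haN, rfl, hne⟩
    rw [← hpi'] at hlt hle ⊢
    rw [eq_of_pp_lt_of_le hmono hi hi' hlt hle]
  rw [traceMem_eq] at hMi ⊢
  exact mem_M1_of_not_mem_M1 hrec (zValued_pad hS)
    (fun _ => truncAfter_pp_eq_one hk _ p) (fun _ => truncAfter_pp_eq_one hk _ p)
    (oneInfoLetter_truncAfter_div h₀ hpi.symm (pp_lt_self hmono hi (by omega)) huniq) hMi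

open Turbo in
/-- In the trace of an input to a recursive convolutional morphism, a `0` is always
followed by a `1`. -/
theorem trace_zero_one {P : Type} [Group P] [Finite P] (Z : Subgroup P) (hZ : Z ≠ ⊤)
    {m k s n : ℕ}
    (𝒞 : ((Fin m → P) × (Fin k → P) × (Fin s → P)) →* ((Fin n → P) × (Fin m → P)))
    (hrec : Recursive Z ⇑𝒞)
    (N : ℕ) (M : Fin m → P) (L : Fin N → Fin k → P) (S : Fin N → Fin s → P)
    (hS : ∀ i j, S i j ∈ Z)
    (wL : ℕ) (p : ℕ → ℕ)
    (hmono : ∀ i j, i < j → j < wL → p i < p j)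
    (hrange : ∀ q, IsInfoPos N (pad L) q ↔ ∃ i < wL, p i = q) :
    ∀ i, i < wL →
      traceMem ⇑𝒞 M (pad L) (pad S) p i ∉ M1 Z ⇑𝒞 →
      traceMem ⇑𝒞 M (pad L) (pad S) p (i + 1) ∈ M1 Z ⇑𝒞 :=
  trace_zero_one_general Z 𝒞 hrec N M L S hS wL p hmono hrange
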